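/- For a signed seminorm ||·||^sgn on V over a trivially valued real closed field and a closed interval [a,b] ⊆ ℝ, the set L = (||·||^sgn)^{-1}([a,b]) ∪ {0} is a convex cone in V; moreover, if b ≥ 0 and a = −b, then L is a K-subspace of V. -/

import Mathlib

noncomputable section

variable {K : Type*} [Field K] [LinearOrder K] [IsStrictOrderedRing K] {V : Type*} [AddCommGroup V] [Module K V]

/-- The sign of an element of a linear ordered field, as a real number. -/
def sgn (x : K) : ℝ := if 0 < x then 1 else if x < 0 then -1 else 0

/-- The trivial absolute value. -/
def trivabs (x : K) : ℝ := if x = 0 then 0 else 1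

/-- `K` is real closed. -/
def IsRealClosed' (K : Type*) [Field K] [LinearOrder K] [IsStrictOrderedRing K] : Prop :=
  (∀ x : K, 0 ≤ x → ∃ y, y * y = x) ∧
  ∀ p : Polynomial K, Odd p.natDegree → ∃ x, p.eval x = 0

/-- A signed seminorm on `V` with respect to the trivial absolute value on `K`
(note `sgn c * trivabs c = sgn c`). -/
def IsSignedSeminormTriv (N : V → ℝ) : Prop :=
  (∀ (c : K) (v : V), N (c • v) = sgn c * N v) ∧
  (∀ v w : V, min (N v) (N w) ≤ N (v + w) ∧ N (v + w) ≤ max (N v) (N w))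

/-! The two axioms of a signed seminorm say that `N (v + w)` lies between `N v` and `N w`, so
`N⁻¹(S) ∪ {0}` is closed under addition whenever `S` is order-connected. Positive scalars leave
`N` unchanged and negative ones negate it, so scaling by all of `K` preserves the set once `S`
is also symmetric. -/

open Set

section

omit [IsStrictOrderedRing K]

lemma sgn_of_pos {x : K} (h : 0 < x) : sgn x = 1 := if_pos h

lemma sgn_of_neg {x : K} (h : x < 0) : sgn x = -1 := by
  rw [sgn, if_neg h.not_gt, if_pos h]

namespace IsSignedSeminormTriv

variable {N : V → ℝ} {S : Set ℝ}

lemma map_smul_of_pos (hN : IsSignedSeminormTriv (K := K) N) {c : K} (hc : 0 < c) (v : V) :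
    N (c • v) = N v := by
  rw [hN.1, sgn_of_pos hc, one_mul]

lemma map_smul_of_neg (hN : IsSignedSeminormTriv (K := K) N) {c : K} (hc : c < 0) (v : V) :
    N (c • v) = -N v := by
  rw [hN.1, sgn_of_neg hc, neg_one_mul]

lemma map_add_mem (hN : IsSignedSeminormTriv (K := K) N) (hS : S.OrdConnected) {v w : V}
    (hv : N v ∈ S) (hw : N w ∈ S) : N (v + w) ∈ S :=
  hS.uIcc_subset hv hw (hN.2 v w)

def preimageCone (hN : IsSignedSeminormTriv (K := K) N) (hS : S.OrdConnected) :
    ConvexCone K V where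
  carrier := N ⁻¹' S ∪ {0}
  smul_mem' c hc v := by
    rintro (hv | rfl)
    · exact Or.inl (by rwa [mem_preimage, hN.map_smul_of_pos hc])
    · exact Or.inr (smul_zero c)
  add_mem' v := by
    rintro (hv | rfl) w (hw | rfl)
    · exact Or.inl (hN.map_add_mem hS hv hw)
    · exact Or.inl (by rwa [add_zero])
    · exact Or.inl (by rwa [zero_add])
    · exact Or.inr (add_zero 0)

def preimageSubmodule (hN : IsSignedSeminormTriv (K := K) N) (hS : S.OrdConnected)
    (hS_neg : ∀ x ∈ S, -x ∈ S) : Submodule K V where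
  carrier := N ⁻¹' S ∪ {0}
  add_mem' hv hw := (hN.preimageCone hS).add_mem' hv hw
  zero_mem' := Or.inr rfl
  smul_mem' c v hv := by
    rcases lt_trichotomy c 0 with hc | rfl | hc
    · rcases hv with hv | rfl
      · exact Or.inl (by rw [mem_preimage, hN.map_smul_of_neg hc]; exact hS_neg _ hv)
      · exact Or.inr (smul_zero c)
    · exact Or.inr (zero_smul K v)
    · exact (hN.preimageCone hS).smul_mem' hc hv

end IsSignedSeminormTriv

end

theorem signedSeminorm_preimage_Icc_convexCone_general
    (N : V → ℝ) (hN : IsSignedSeminormTriv (K := K) N) (a b : ℝ) :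
    (Convex K (N ⁻¹' Set.Icc a b ∪ {0}) ∧
      ∀ (t : K), 0 < t → ∀ v ∈ N ⁻¹' Set.Icc a b ∪ {0}, t • v ∈ N ⁻¹' Set.Icc a b ∪ {0}) ∧
    (0 ≤ b → a = -b → ∃ W : Submodule K V, (W : Set V) = N ⁻¹' Set.Icc a b ∪ {0}) := by
  let C := hN.preimageCone (S := Icc a b) ordConnected_Icc
  refine ⟨⟨C.convex, fun t ht v hv ↦ C.smul_mem ht hv⟩, ?_⟩
  rintro - rfl
  have hS_neg : ∀ x ∈ Icc (-b) b, -x ∈ Icc (-b) b := fun x hx ↦ by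
    rwa [← mem_neg, neg_Icc, neg_neg]
  exact ⟨hN.preimageSubmodule (S := Icc (-b) b) ordConnected_Icc hS_neg, rfl⟩

/-- The preimage of a closed interval under a signed seminorm (together with 0)
is a convex cone; if moreover `b ≥ 0` and `a = -b` it is a subspace. -/
theorem signedSeminorm_preimage_Icc_convexCone
    (hK : IsRealClosed' K) [FiniteDimensional K V]
    (N : V → ℝ) (hN : IsSignedSeminormTriv (K := K) N) (a b : ℝ) :
    (Convex K (N ⁻¹' Set.Icc a b ∪ {0}) ∧
      ∀ (t : K), 0 < t → ∀ v ∈ N ⁻¹' Set.Icc a b ∪ {0}, t • v ∈ N ⁻¹' Set.Icc a b ∪ {0}) ∧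
    (0 ≤ b → a = -b → ∃ W : Submodule K V, (W : Set V) = N ⁻¹' Set.Icc a b ∪ {0}) :=
  signedSeminorm_preimage_Icc_convexCone_general N hN a b
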